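/- arXiv:1401.2273 — 7 statements merged into one kernel-verified Lean document; each statement's English description precedes it below -/
import Mathlib

section
/- Let H be a subgroup of a group Γ. Suppose there is a retraction ρ : Γ → H (i.e., a homomorphism from Γ to H restricting to the identity on H), and suppose that for every nontrivial h ∈ H, the centralizer of h in Γ is contained in H. Then H is malnormal in Γ. -/
/-! If `γ⁻¹ x γ ∈ H` with `1 ≠ x ∈ H`, applying the retraction shows that `ρ γ` conjugates `x`
to the same element, so `γ (ρ γ)⁻¹` centralizes `x`; it therefore lies in `H`, and so does
`γ = γ (ρ γ)⁻¹ · ρ γ`. -/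

theorem MonoidHom.inv_mul_mul_eq_of_map_eq {G : Type*} [Group G] (ρ : G →* G) {x γ : G}
    (hx : ρ x = x) (hconj : ρ (γ⁻¹ * x * γ) = γ⁻¹ * x * γ) :
    (ρ γ)⁻¹ * x * ρ γ = γ⁻¹ * x * γ := by
  simpa [hx] using hconj

theorem Commute.mul_inv_of_conj_eq {G : Type*} [Group G] {a b x : G}
    (h : a⁻¹ * x * a = b⁻¹ * x * b) : Commute (b * a⁻¹) x := by
  calc b * a⁻¹ * x = b * (a⁻¹ * x * a) * a⁻¹ := by group
    _ = b * (b⁻¹ * x * b) * a⁻¹ := by rw [h]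
    _ = x * (b * a⁻¹) := by group

/-- If `H` is a retract of `Γ` and the centralizer of every nontrivial element of `H`
is contained in `H`, then `H` is malnormal in `Γ`. -/
theorem malnormal_of_retract_of_centralizer {Γ : Type*} [Group Γ] (H : Subgroup Γ)
    (ρ : Γ →* Γ) (hρran : ∀ g : Γ, ρ g ∈ H) (hρid : ∀ h ∈ H, ρ h = h)
    (hcent : ∀ h ∈ H, h ≠ 1 → ∀ γ : Γ, γ * h = h * γ → γ ∈ H) :
    ∀ γ : Γ, γ ∉ H → ∀ x ∈ H, γ⁻¹ * x * γ ∈ H → x = 1 := by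
  intro γ hγ x hx hconj
  by_contra hx1
  have hsame : (ρ γ)⁻¹ * x * ρ γ = γ⁻¹ * x * γ :=
    ρ.inv_mul_mul_eq_of_map_eq (hρid x hx) (hρid _ hconj)
  have hcentral : γ * (ρ γ)⁻¹ ∈ H := hcent x hx hx1 _ (Commute.mul_inv_of_conj_eq hsame).eq
  exact hγ (by simpa using H.mul_mem hcentral (hρran γ))
end

section
/- A group G has a nontrivial finite quotient if and only if the free product G * G * G is large, where a group is large if it has a finite-index subgroup that surjects onto a non-abelian free group. -/
/-!
Given `π : G → Q` onto a finite group and `g` with `π g ≠ 1`, send the `i`-th factor of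
`G * G * G` to the conjugate of the diagonal copy `inl ∘ π` of `Q` in the wreath product
`F₂ ≀ᵣ Q` by the base element concentrated at `1` with value `dᵢ`, where `d = (1, a, b)`.
The preimage of the base group `Q → F₂` has finite index, and evaluation at `1` is a
homomorphism on it taking `ofᵢ g * (of₀ g)⁻¹` to `dᵢ`, hence onto `F₂`.

Conversely, pulling back a proper finite-index subgroup of `F₂` shows that a large group has a
proper finite-index subgroup `H`; since the factors generate the free product, `H` misses some
factor, and the normal core of its trace there is a proper normal subgroup of finite index.
-/

/-- A group `L` is large if it has a finite-index subgroup surjecting onto a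
non-abelian free group. -/
def IsLarge (L : Type*) [Group L] : Prop :=
  ∃ K : Subgroup L, K.FiniteIndex ∧ ∃ f : K →* FreeGroup (Fin 2), Function.Surjective f

open Monoid RegularWreathProduct

universe u

namespace Subgroup

instance finiteIndex_comap {G H : Type*} [Group G] [Group H] (f : G →* H) (K : Subgroup H)
    [K.FiniteIndex] : (K.comap f).FiniteIndex :=
  have := isFiniteRelIndex_of_finiteIndex (H := K) (K := f.range)
  finiteIndex_iff.mpr (by rw [index_comap]; exact relIndex_ne_zero)

theorem exists_finiteIndex_ne_top_of_surjective {G H : Type*} [Group G] [Group H] {f : G →* H}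
    (hf : Function.Surjective f) {K : Subgroup H} [K.FiniteIndex] (hK : K ≠ ⊤) :
    ∃ L : Subgroup G, L.FiniteIndex ∧ L ≠ ⊤ := by
  refine ⟨K.comap f, inferInstance, fun h => hK ?_⟩
  rw [← index_eq_one, ← index_comap_of_surjective K hf, h, index_top]

theorem exists_nontrivial_finite_quotient_of_ne_top {G : Type u} [Group G] {K : Subgroup G}
    [K.FiniteIndex] (hK : K ≠ ⊤) :
    ∃ (Q : Type u) (_ : Group Q) (_ : Finite Q) (_ : Nontrivial Q) (f : G →* Q),
      Function.Surjective f :=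
  ⟨G ⧸ K.normalCore, inferInstance, inferInstance,
    QuotientGroup.nontrivial_iff.mpr (ne_top_of_le_ne_top hK K.normalCore_le),
    QuotientGroup.mk' _, QuotientGroup.mk'_surjective _⟩

end Subgroup

theorem FreeGroup.exists_finiteIndex_ne_top {α : Type*} [Nonempty α] :
    ∃ K : Subgroup (FreeGroup α), K.FiniteIndex ∧ K ≠ ⊤ := by
  let f : FreeGroup α →* Multiplicative (ZMod 2) := FreeGroup.lift fun _ => .ofAdd 1
  obtain ⟨a⟩ := ‹Nonempty α›
  refine ⟨f.ker, inferInstance, fun h => ?_⟩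
  have : f (FreeGroup.of a) = 1 := f.mem_ker.mp (h ▸ Subgroup.mem_top _)
  simp [f] at this

theorem IsLarge.exists_finiteIndex_ne_top {L : Type*} [Group L] (hL : IsLarge L) :
    ∃ H : Subgroup L, H.FiniteIndex ∧ H ≠ ⊤ := by
  obtain ⟨K, hK, f, hf⟩ := hL
  obtain ⟨N, _, hNtop⟩ := FreeGroup.exists_finiteIndex_ne_top (α := Fin 2)
  obtain ⟨K', hK', hK'top⟩ := Subgroup.exists_finiteIndex_ne_top_of_surjective hf hNtop
  refine ⟨K'.map K.subtype, Subgroup.finiteIndex_iff.mpr ?_, fun h => hK'top ?_⟩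
  · rw [Subgroup.index_map_subtype]
    exact mul_ne_zero hK'.index_ne_zero hK.index_ne_zero
  · have := Subgroup.index_map_subtype K'
    rw [h, Subgroup.index_top, eq_comm, mul_eq_one] at this
    exact Subgroup.index_eq_one.mp this.1

theorem Monoid.CoprodI.exists_comap_of_ne_top {ι : Type*} {G : ι → Type*} [∀ i, Group (G i)]
    {H : Subgroup (CoprodI G)} (hH : H ≠ ⊤) : ∃ i, H.comap (CoprodI.of (i := i)) ≠ ⊤ := by
  by_contra! h
  refine hH (eq_top_iff.mpr ?_)
  calc (⊤ : Subgroup (CoprodI G)) = (CoprodI.lift fun i => CoprodI.of).range := by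
        rw [CoprodI.lift_of', MonoidHom.range_eq_top_of_surjective _ Function.surjective_id]
    _ ≤ H := CoprodI.lift_range_le G _ fun i => by
        rintro _ ⟨x, rfl⟩
        exact Subgroup.mem_comap.mp (h i ▸ Subgroup.mem_top x)

namespace RegularWreathProduct

variable {D Q : Type*} [Group D] [Group Q]

def single [DecidableEq Q] (d : D) : D ≀ᵣ Q := ⟨Pi.mulSingle 1 d, 1⟩

@[simp]
theorem right_single [DecidableEq Q] (d : D) : (single d : D ≀ᵣ Q).right = 1 := rfl

def evalOneOnKer : (rightHom : D ≀ᵣ Q →* Q).ker →* D where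
  toFun x := (x : D ≀ᵣ Q).left 1
  map_one' := rfl
  map_mul' x y := by
    have hx : (x : D ≀ᵣ Q).right = 1 := x.2
    show (x : D ≀ᵣ Q).left 1 * (y : D ≀ᵣ Q).left ((x : D ≀ᵣ Q).right⁻¹ * 1) = _
    rw [hx, inv_one, one_mul]

theorem conj_single_inl_mul_inv_left_one [DecidableEq Q] (d d' : D) {q : Q} (hq : q ≠ 1) :
    (MulAut.conj (single d) (inl q) * (MulAut.conj (single d') (inl q))⁻¹).left 1 =
      d * d'⁻¹ := by
  simp [single, hq]

end RegularWreathProduct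

theorem Monoid.CoprodI.exists_finiteIndex_mul_inv_mem_range {ι G Q D : Type*} [Group G]
    [Group Q] [Group D] [Finite Q] (π : G →* Q) {g : G} (hg : π g ≠ 1) (w : ι → D) :
    ∃ K : Subgroup (CoprodI fun _ : ι => G), K.FiniteIndex ∧
      ∃ f : K →* D, ∀ i k, w i * (w k)⁻¹ ∈ f.range := by
  classical
  let Φ : (CoprodI fun _ : ι => G) →* D ≀ᵣ Q :=
    CoprodI.lift fun i => (MulAut.conj (single (w i))).toMonoidHom.comp (inl.comp π)
  refine ⟨rightHom.ker.comap Φ, inferInstance,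
    evalOneOnKer.comp (Φ.subgroupComap _), fun i k => ?_⟩
  have hmem : CoprodI.of (i := i) g * (CoprodI.of (i := k) g)⁻¹ ∈ rightHom.ker.comap Φ := by
    simp [Φ]
  refine ⟨⟨_, hmem⟩, ?_⟩
  rw [← conj_single_inl_mul_inv_left_one (w i) (w k) hg]
  show (Φ (CoprodI.of (i := i) g * (CoprodI.of (i := k) g)⁻¹)).left 1 = _
  simp [Φ]

theorem Monoid.CoprodI.isLarge_fin_three_of_map_ne_one {G Q : Type*} [Group G] [Group Q]
    [Finite Q] (π : G →* Q) {g : G} (hg : π g ≠ 1) :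
    IsLarge (CoprodI fun _ : Fin 3 => G) := by
  obtain ⟨K, hK, f, hf⟩ := exists_finiteIndex_mul_inv_mem_range π hg
    (Fin.cons 1 FreeGroup.of : Fin 3 → FreeGroup (Fin 2))
  refine ⟨K, hK, f, MonoidHom.range_eq_top.mp (eq_top_iff.mpr ?_)⟩
  rw [← FreeGroup.closure_range_of, Subgroup.closure_le]
  rintro _ ⟨j, rfl⟩
  simpa using hf j.succ 0

/-- A group `G` has a nontrivial finite quotient if and only if `G * G * G` is large. -/
theorem nontrivial_finite_quotient_iff_large_triple (G : Type) [Group G] :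
    (∃ (Q : Type) (_ : Group Q) (_ : Finite Q) (_ : Nontrivial Q) (f : G →* Q),
      Function.Surjective f) ↔
    IsLarge (Monoid.CoprodI (fun _ : Fin 3 => G)) := by
  constructor
  · rintro ⟨Q, _, _, _, π, hπ⟩
    obtain ⟨q, hq⟩ := exists_ne (1 : Q)
    obtain ⟨g, rfl⟩ := hπ q
    exact CoprodI.isLarge_fin_three_of_map_ne_one π hq
  · intro hL
    obtain ⟨H, _, hH⟩ := hL.exists_finiteIndex_ne_top
    obtain ⟨i, hi⟩ := CoprodI.exists_comap_of_ne_top hH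
    exact Subgroup.exists_nontrivial_finite_quotient_of_ne_top hi
end

section
/- If a group G admits a surjective homomorphism onto a nontrivial finite group Q, then the free product G * G * G admits a finite-index subgroup that surjects onto a non-abelian free group. -/
/-!
Embed `G ∗ G ∗ ⋯` into the regular wreath product `F ≀ᵣ Q` by sending the `i`-th factor through
`f : G → Q` and then conjugating by the base element `cᵢ` with value `wᵢ ∈ F` at `1` and `1`
elsewhere. The composite with `F ≀ᵣ Q → Q` is the fold map, so its kernel `K` has finite index,
and `K` lands in the base group `Q → F`, where evaluation at `1` is a homomorphism to `F`.
If `f g = q ≠ 1`, the element `gᵢ gⱼ⁻¹` of `K` maps to `cᵢ (q • cᵢ⁻¹cⱼ) cⱼ⁻¹`, whose value at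
`1` is `wᵢ wⱼ⁻¹` because `q • (cᵢ⁻¹cⱼ)` is supported at `q`. With `w = (1, x, y)` this hits both
generators of `FreeGroup (Fin 2)`.
-/

open Monoid RegularWreathProduct

namespace RegularWreathProduct

variable {D Q : Type*} [Group D] [Group Q]

def evalOneOfKer : (rightHom : D ≀ᵣ Q →* Q).ker →* D where
  toFun x := x.1.left 1
  map_one' := rfl
  map_mul' x y := by
    have hx : x.1.right = 1 := x.2
    simp [hx]

end RegularWreathProduct

namespace Monoid.CoprodI

variable {ι G Q F : Type*} [Group G] [Group Q] [DecidableEq Q] [Group F] (f : G →* Q) (w : ι → F)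

noncomputable def liftConjWreath : CoprodI (fun _ : ι => G) →* F ≀ᵣ Q :=
  lift fun i => (MulAut.conj (⟨Pi.mulSingle 1 (w i), 1⟩ : F ≀ᵣ Q)).toMonoidHom.comp (inl.comp f)

theorem rightHom_comp_liftConjWreath :
    rightHom.comp (liftConjWreath f w) = lift fun _ => f := by
  ext i g
  simp [liftConjWreath]

noncomputable def kerLiftEval : (lift fun _ : ι => f).ker →* F :=
  evalOneOfKer.comp <| ((liftConjWreath f w).comp (Subgroup.subtype _)).codRestrict _ fun k => by
    rw [MonoidHom.mem_ker, ← MonoidHom.comp_apply, ← MonoidHom.comp_assoc,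
      rightHom_comp_liftConjWreath]
    exact k.2

theorem kerLiftEval_apply (k : (lift fun _ : ι => f).ker) :
    kerLiftEval f w k = (liftConjWreath f w k).left 1 := rfl

theorem exists_kerLiftEval_eq {g : G} (hg : f g ≠ 1) (i j : ι) :
    ∃ k, kerLiftEval f w k = w i * (w j)⁻¹ := by
  refine ⟨⟨of (i := i) g * (of (i := j) g)⁻¹, by simp⟩, ?_⟩
  have hg' : (f g)⁻¹ ≠ 1 := inv_ne_one.mpr hg
  simp [kerLiftEval_apply, liftConjWreath, MulAut.conj_apply, Pi.mulSingle_apply, hg']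

end Monoid.CoprodI

/-- If a group `G` surjects onto a nontrivial finite group `Q`, then the free
product `G * G * G` has a finite-index subgroup surjecting onto a non-abelian
free group. -/
theorem large_triple_of_finite_quotient (G : Type) [Group G] (Q : Type) [Group Q]
    [Finite Q] [Nontrivial Q] (f : G →* Q) (hf : Function.Surjective f) :
    ∃ K : Subgroup (Monoid.CoprodI (fun _ : Fin 3 => G)), K.FiniteIndex ∧
      ∃ g : K →* FreeGroup (Fin 2), Function.Surjective g := by
  classical
  obtain ⟨q, hq⟩ := exists_ne (1 : Q)
  obtain ⟨g, rfl⟩ := hf q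
  let w : Fin 3 → FreeGroup (Fin 2) := ![1, .of 0, .of 1]
  refine ⟨_, Subgroup.finiteIndex_ker _, CoprodI.kerLiftEval f w, ?_⟩
  rw [← MonoidHom.range_eq_top, eq_top_iff, ← FreeGroup.closure_range_of, Subgroup.closure_le]
  rintro _ ⟨n, rfl⟩
  obtain ⟨k, hk⟩ := CoprodI.exists_kerLiftEval_eq f w hq n.succ 0
  exact ⟨k, by fin_cases n <;> simpa [w] using hk⟩
end

section
/- Let A be a finite group, B ≤ A a subgroup, and consider the subgroup H = ⟨B, t⟩ of the free product Γ = A * ⟨t⟩ where ⟨t⟩ is infinite cyclic. Then H is isomorphic to B * ⟨t⟩ and is almost malnormal in Γ. -/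
open Monoid

/-!
Write elements of a free product `∗ᵢ Gᵢ` as reduced words. For injective `fᵢ : Nᵢ →* Gᵢ`, the
image of `∗ᵢ Nᵢ` consists exactly of the reduced words all of whose letters lie in the ranges of
the `fᵢ`; in particular `∗ᵢ Nᵢ` embeds. Call such letters good.

If `γ` is not in that image `H`, split off its longest good prefix: `γ = h * a * v` with `h ∈ H`,
`a ∈ Gⱼ` a bad letter and `v` a reduced word not starting in `Gⱼ`. If `x` and `γ⁻¹ x γ` lie in
`H`, so do `y = h⁻¹ x h` and `v⁻¹ (a⁻¹ y a) v`. Were `y` outside `Gⱼ`, the reduced word of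
`a⁻¹ y a` would begin with a bad letter of `Gⱼ` and end in `Gⱼ`, so `v⁻¹ (a⁻¹ y a) v` would be
reduced as written and contain a bad letter. Hence `H ∩ γ H γ⁻¹` lies in `h Gⱼ h⁻¹`, which is
finite when `Gⱼ` is. A binary free product `A ∗ ℤ` is the case of the
`Bool`-indexed family `(A, ℤ)`.
-/

namespace Monoid.CoprodI

variable {ι : Type*} {N G : ι → Type*} [∀ i, Group (N i)] [∀ i, Group (G i)]

def map (f : ∀ i, N i →* G i) : CoprodI N →* CoprodI G :=
  lift fun i => of.comp (f i)

@[simp]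
theorem map_of (f : ∀ i, N i →* G i) {i : ι} (n : N i) : map f (of n) = of (f i n) :=
  lift_of _ n

theorem Word.prod_surjective : Function.Surjective (Word.prod : Word G → CoprodI G) := by
  classical
  exact Word.equiv.symm.surjective

theorem Word.prod_injective : Function.Injective (Word.prod : Word G → CoprodI G) := by
  classical
  exact Word.equiv.symm.injective

variable {f : ∀ i, N i →* G i}

def Word.map (hf : ∀ i, Function.Injective (f i)) (w : Word N) : Word G where
  toList := w.toList.map fun l => ⟨l.1, f l.1 l.2⟩
  ne_one := by
    simp only [List.mem_map]
    rintro _ ⟨l, hl, rfl⟩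
    exact (map_ne_one_iff _ (hf l.1)).2 (w.ne_one l hl)
  chain_ne :=
    List.isChain_map_of_isChain (R := fun l l' => l.1 ≠ l'.1) _ (fun _ _ h => h) w.chain_ne

theorem Word.map_injective (hf : ∀ i, Function.Injective (f i)) :
    Function.Injective (Word.map hf) := by
  intro w w' h
  refine Word.ext (List.map_injective_iff.2 ?_ (congrArg Word.toList h))
  rintro ⟨i, n⟩ ⟨i', n'⟩ hl
  simp only [Sigma.mk.inj_iff] at hl
  obtain ⟨rfl, hn⟩ := hl
  rw [hf i (eq_of_heq hn)]

theorem Word.prod_map (hf : ∀ i, Function.Injective (f i)) (w : Word N) :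
    (w.map hf).prod = CoprodI.map f w.prod := by
  simp [Word.map, Word.prod, map_list_prod, Function.comp_def]

theorem map_injective (hf : ∀ i, Function.Injective (f i)) : Function.Injective (map f) := by
  intro x y hxy
  obtain ⟨w, rfl⟩ := Word.prod_surjective x
  obtain ⟨w', rfl⟩ := Word.prod_surjective y
  rw [← Word.prod_map hf, ← Word.prod_map hf] at hxy
  rw [Word.map_injective hf (Word.prod_injective hxy)]

theorem Word.prod_mem_range_map_iff (hf : ∀ i, Function.Injective (f i)) (w : Word G) :
    w.prod ∈ (CoprodI.map f).range ↔ ∀ l ∈ w.toList, l.2 ∈ (f l.1).range := by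
  constructor
  · rintro ⟨y, hy⟩
    obtain ⟨v, rfl⟩ := Word.prod_surjective y
    rw [← Word.prod_map hf] at hy
    obtain rfl := Word.prod_injective hy
    simp only [Word.map, List.mem_map]
    rintro _ ⟨l, -, rfl⟩
    exact ⟨l.2, rfl⟩
  · intro h
    refine Subgroup.list_prod_mem (K := (CoprodI.map f).range) ?_
    simp only [List.mem_map]
    rintro _ ⟨l, hl, rfl⟩
    obtain ⟨n, hn⟩ := h l hl
    exact ⟨of n, by rw [map_of, hn]⟩

namespace NeWord

variable {i j k : ι}

theorem head_mem_toList (w : NeWord G i j) : ⟨i, w.head⟩ ∈ w.toList :=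
  List.mem_of_mem_head? w.toList_head?

theorem last_mem_toList (w : NeWord G i j) : ⟨j, w.last⟩ ∈ w.toList :=
  List.mem_of_mem_getLast? w.toList_getLast?

theorem fstIdx_toWord (w : NeWord G i j) : w.toWord.fstIdx = some i := by
  simp [Word.fstIdx, toWord]

theorem prod_mem_range_map_iff (hf : ∀ i, Function.Injective (f i)) (w : NeWord G i j) :
    w.prod ∈ (CoprodI.map f).range ↔ ∀ l ∈ w.toList, l.2 ∈ (f l.1).range :=
  Word.prod_mem_range_map_iff hf w.toWord

theorem exists_prod_eq_of_mul_prod (w : NeWord G i k) (hw : w.head ∈ (f i).range) {a : G j}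
    (ha : a ∉ (f j).range) :
    ∃ w' : NeWord G j k, w'.prod = of a * w.prod ∧ w'.head ∉ (f j).range := by
  by_cases hij : i = j
  · subst hij
    have hne : a * w.head ≠ 1 := fun h => ha (by
      rw [mul_eq_one_iff_eq_inv.1 h]; exact inv_mem hw)
    refine ⟨w.mulHead a hne, mulHead_prod .., fun h => ha ?_⟩
    rw [mulHead_head] at h
    simpa using mul_mem h (inv_mem hw)
  · have ha1 : a ≠ 1 := fun h => ha (h ▸ one_mem _)
    exact ⟨(singleton a ha1).append (Ne.symm hij) w, by simp, by simpa using ha⟩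

theorem exists_prod_eq_prod_mul_of (w : NeWord G i k) (hw : w.last ∈ (f k).range) {a : G j}
    (ha : a ∉ (f j).range) :
    ∃ w' : NeWord G i j, w'.prod = w.prod * of a := by
  obtain ⟨w', hw', -⟩ := w.inv.exists_prod_eq_of_mul_prod (by simpa using inv_mem hw)
    (a := a⁻¹) (by simpa using ha)
  exact ⟨w'.inv, by simp [hw']⟩

end NeWord

/-- `x` not being a single letter of `G j` keeps the two ends of `a⁻¹ x a` apart. -/
theorem exists_neWord_eq_conj (hf : ∀ i, Function.Injective (f i)) {j : ι} {x : CoprodI G}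
    (hx : x ∈ (CoprodI.map f).range) (hxj : x ∉ (of : G j →* CoprodI G).range) {a : G j}
    (ha : a ∉ (f j).range) :
    ∃ z : NeWord G j j, z.prod = (of a)⁻¹ * x * of a ∧ z.head ∉ (f j).range := by
  have ha' : a⁻¹ ∉ (f j).range := by simpa using ha
  obtain ⟨v, rfl⟩ := Word.prod_surjective x
  have hv : v ≠ Word.empty := by
    rintro rfl
    exact hxj ⟨1, by simp [Word.prod_empty]⟩
  obtain ⟨i, k, w, rfl⟩ := NeWord.of_word v hv
  have hgood : ∀ l ∈ w.toList, l.2 ∈ (f l.1).range := (w.prod_mem_range_map_iff hf).1 hx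
  change w.prod ∉ _ at hxj
  change ∃ z : NeWord G j j, z.prod = _ * w.prod * _ ∧ _
  cases w with
  | singleton m hm =>
    have hij : i ≠ j := by
      rintro rfl
      exact hxj ⟨m, (NeWord.prod_singleton m hm).symm⟩
    obtain ⟨w', hw', hhead⟩ := (NeWord.singleton m hm).exists_prod_eq_of_mul_prod
      (hgood _ (NeWord.head_mem_toList _)) ha'
    refine ⟨w'.append hij (.singleton a (fun h => ha (h ▸ one_mem _))), ?_, by simpa using hhead⟩
    simp [hw']
  | append w₁ hne w₂ =>
    obtain ⟨w₁', hw₁', hhead⟩ := w₁.exists_prod_eq_of_mul_prod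
      (hgood _ (List.mem_append_left _ w₁.head_mem_toList)) ha'
    obtain ⟨w₂', hw₂'⟩ := w₂.exists_prod_eq_prod_mul_of
      (hgood _ (List.mem_append_right _ w₂.last_mem_toList)) ha
    refine ⟨w₁'.append hne w₂', ?_, by simpa using hhead⟩
    simp [hw₁', hw₂', mul_assoc]

theorem conj_prod_notMem_range_map (hf : ∀ i, Function.Injective (f i)) {j : ι}
    (z : NeWord G j j) (hz : z.head ∉ (f j).range) (v : Word G) (hv : v.fstIdx ≠ some j) :
    v.prod⁻¹ * z.prod * v.prod ∉ (CoprodI.map f).range := by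
  by_cases hv0 : v = Word.empty
  · subst hv0
    rw [Word.prod_empty, inv_one, one_mul, mul_one, z.prod_mem_range_map_iff hf]
    exact fun h => hz (h _ z.head_mem_toList)
  obtain ⟨k, l, v', rfl⟩ := NeWord.of_word v hv0
  have hkj : k ≠ j := fun h => hv (h ▸ v'.fstIdx_toWord)
  let u := v'.inv.append hkj (z.append hkj.symm v')
  change v'.prod⁻¹ * z.prod * v'.prod ∉ _
  have hu : u.prod = v'.prod⁻¹ * z.prod * v'.prod := by simp [u, mul_assoc]
  rw [← hu, u.prod_mem_range_map_iff hf]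
  exact fun h => hz (h _ (List.mem_append_right _ (List.mem_append_left _ z.head_mem_toList)))

theorem exists_eq_mul_of_mul_prod_of_notMem_range_map {γ : CoprodI G}
    (hγ : γ ∉ (CoprodI.map f).range) :
    ∃ h ∈ (CoprodI.map f).range, ∃ (j : ι) (a : G j) (v : Word G),
      a ∉ (f j).range ∧ v.fstIdx ≠ some j ∧ γ = h * of a * v.prod := by
  obtain ⟨w, rfl⟩ := Word.prod_surjective γ
  induction w using Word.consRecOn with
  | empty => exact absurd (one_mem _) hγ
  | cons i m w hw hm ih =>
    rw [Word.prod_cons] at hγ ⊢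
    by_cases hmf : m ∈ (f i).range
    · have hmH : of m ∈ (CoprodI.map f).range := by
        obtain ⟨n, rfl⟩ := hmf
        exact ⟨of n, map_of f n⟩
      obtain ⟨h, hh, j, a, v, ha, hv, hw⟩ := ih fun h => hγ (mul_mem hmH h)
      exact ⟨of m * h, mul_mem hmH hh, j, a, v, ha, hv, by rw [hw]; group⟩
    · exact ⟨1, one_mem _, i, m, w, hmf, hw, by group⟩

theorem exists_setOf_mem_range_map_and_conj_mem_subset (hf : ∀ i, Function.Injective (f i))
    {γ : CoprodI G} (hγ : γ ∉ (CoprodI.map f).range) :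
    ∃ (g : CoprodI G) (j : ι), (f j).range ≠ ⊤ ∧
      {x | x ∈ (CoprodI.map f).range ∧ γ⁻¹ * x * γ ∈ (CoprodI.map f).range} ⊆
        Set.range fun c : G j => g * of c * g⁻¹ := by
  obtain ⟨h, hh, j, a, v, ha, hv, rfl⟩ := exists_eq_mul_of_mul_prod_of_notMem_range_map hγ
  refine ⟨h, j, fun htop => ha (htop ▸ Subgroup.mem_top a), ?_⟩
  rintro x ⟨hx, hγx⟩
  have hx' : h⁻¹ * x * h ∈ (CoprodI.map f).range := mul_mem (mul_mem (inv_mem hh) hx) hh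
  by_cases hxj : h⁻¹ * x * h ∈ (of : G j →* CoprodI G).range
  · obtain ⟨c, hc⟩ := hxj
    exact ⟨c, by simp only [hc]; group⟩
  · obtain ⟨z, hz, hzh⟩ := exists_neWord_eq_conj hf hx' hxj ha
    refine absurd ?_ (conj_prod_notMem_range_map hf z hzh v hv)
    convert hγx using 1
    rw [hz]
    group

theorem finite_setOf_mem_range_map_and_conj_mem (hf : ∀ i, Function.Injective (f i))
    (hfin : ∀ i, (f i).range ≠ ⊤ → Finite (G i)) {γ : CoprodI G}
    (hγ : γ ∉ (CoprodI.map f).range) :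
    {x | x ∈ (CoprodI.map f).range ∧ γ⁻¹ * x * γ ∈ (CoprodI.map f).range}.Finite := by
  obtain ⟨g, j, hj, hsub⟩ := exists_setOf_mem_range_map_and_conj_mem_subset hf hγ
  have := hfin j hj
  exact (Set.finite_range _).subset hsub

end Monoid.CoprodI

namespace Monoid.Coprod

universe u

variable {M N M' N' : Type u} [Group M] [Group N] [Group M'] [Group N']

abbrev family (M N : Type u) : Bool → Type u
  | false => M
  | true => N

instance instGroupFamily (M N : Type u) [Group M] [Group N] : ∀ b, Group (family M N b)
  | false => ‹Group M›
  | true => ‹Group N›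

def familyHom (φ : M' →* M) (ψ : N' →* N) : ∀ b, family M' N' b →* family M N b
  | false => φ
  | true => ψ

theorem familyHom_injective {φ : M' →* M} {ψ : N' →* N} (hφ : Function.Injective φ)
    (hψ : Function.Injective ψ) : ∀ b, Function.Injective (familyHom φ ψ b)
  | false => hφ
  | true => hψ

def equivCoprodI : M ∗ N ≃* CoprodI (family M N) :=
  MonoidHom.toMulEquiv
    (lift (CoprodI.of (M := family M N) (i := false)) (CoprodI.of (M := family M N) (i := true)))
    (CoprodI.lift fun | false => inl | true => inr)
    (hom_ext (MonoidHom.ext fun _ => by simp) (MonoidHom.ext fun _ => by simp))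
    (CoprodI.ext_hom _ _ fun | false => MonoidHom.ext fun _ => by simp
                             | true => MonoidHom.ext fun _ => by simp)

@[simp]
theorem equivCoprodI_inl (m : M) :
    equivCoprodI (inl m : M ∗ N) = CoprodI.of (M := family M N) (i := false) m :=
  rfl

@[simp]
theorem equivCoprodI_inr (n : N) :
    equivCoprodI (inr n : M ∗ N) = CoprodI.of (M := family M N) (i := true) n :=
  rfl

theorem equivCoprodI_map (φ : M' →* M) (ψ : N' →* N) (x : M' ∗ N') :
    equivCoprodI (map φ ψ x) = CoprodI.map (familyHom φ ψ) (equivCoprodI x) := by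
  induction x using induction_on <;> simp_all [familyHom]

theorem map_range_map_equivCoprodI (φ : M' →* M) (ψ : N' →* N) :
    (map φ ψ).range.map equivCoprodI.toMonoidHom = (CoprodI.map (familyHom φ ψ)).range := by
  rw [MonoidHom.map_range, MonoidHom.range_eq_map, MonoidHom.range_eq_map,
    ← (Subgroup.map_top_of_surjective _ equivCoprodI.surjective), Subgroup.map_map]
  exact congrArg (Subgroup.map · ⊤) (MonoidHom.ext fun x => equivCoprodI_map φ ψ x)

theorem map_injective {φ : M' →* M} {ψ : N' →* N} (hφ : Function.Injective φ)
    (hψ : Function.Injective ψ) : Function.Injective (map φ ψ) := by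
  intro x y hxy
  apply equivCoprodI.injective
  apply CoprodI.map_injective (familyHom_injective hφ hψ)
  rw [← equivCoprodI_map, ← equivCoprodI_map, hxy]

theorem finite_setOf_mem_range_map_and_conj_mem {φ : M' →* M} {ψ : N' →* N}
    (hφ : Function.Injective φ) (hψ : Function.Injective ψ) (hM : φ.range ≠ ⊤ → Finite M)
    (hN : ψ.range ≠ ⊤ → Finite N) {γ : M ∗ N} (hγ : γ ∉ (map φ ψ).range) :
    {x | x ∈ (map φ ψ).range ∧ γ⁻¹ * x * γ ∈ (map φ ψ).range}.Finite := by
  have hmem (x : M ∗ N) :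
      x ∈ (map φ ψ).range ↔ equivCoprodI x ∈ (CoprodI.map (familyHom φ ψ)).range := by
    rw [← map_range_map_equivCoprodI]
    exact (Subgroup.mem_map_iff_mem equivCoprodI.injective).symm
  have hfin : ∀ b, (familyHom φ ψ b).range ≠ ⊤ → Finite (family M N b)
    | false => hM
    | true => hN
  refine ((CoprodI.finite_setOf_mem_range_map_and_conj_mem (familyHom_injective hφ hψ) hfin
    ((hmem γ).not.1 hγ)).preimage equivCoprodI.injective.injOn).subset ?_
  rintro x ⟨hx, hγx⟩
  refine ⟨(hmem x).1 hx, ?_⟩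
  simpa only [map_mul, map_inv] using (hmem _).1 hγx

theorem closure_image_inl_union_image_inr (K : Subgroup M) {S : Set N}
    (hS : Subgroup.closure S = ⊤) :
    Subgroup.closure ((inl : M →* M ∗ N) '' K ∪ inr '' S) =
      (map K.subtype (MonoidHom.id N)).range := by
  apply le_antisymm
  · rw [Subgroup.closure_le]
    rintro _ (⟨k, hk, rfl⟩ | ⟨n, -, rfl⟩)
    · exact ⟨inl ⟨k, hk⟩, rfl⟩
    · exact ⟨inr n, rfl⟩
  · rintro _ ⟨x, rfl⟩
    induction x using induction_on with
    | inl k => exact Subgroup.subset_closure (Or.inl ⟨k, k.2, rfl⟩)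
    | inr n =>
      have hn := Subgroup.mem_map_of_mem (inr : N →* M ∗ N) (hS ▸ Subgroup.mem_top n)
      rw [MonoidHom.map_closure] at hn
      exact Subgroup.closure_mono Set.subset_union_right hn
    | mul x y hx hy => simpa only [map_mul] using mul_mem hx hy

end Monoid.Coprod

/-- Let `A` be a finite group and `B ≤ A`.  In the free product `Γ = A * ⟨t⟩`
(with `⟨t⟩` infinite cyclic, realized as the free group on one generator), the
subgroup `H = ⟨B, t⟩` is isomorphic to `B * ⟨t⟩` and is almost malnormal in `Γ`. -/
theorem subgroup_of_free_product_almost_malnormal (A : Type) [Group A] [Finite A]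
    (B : Subgroup A) :
    let Γ := Coprod A (FreeGroup Unit)
    let t : Γ := Coprod.inr (FreeGroup.of ())
    let H : Subgroup Γ :=
      Subgroup.closure ((Coprod.inl : A →* Γ) '' (B : Set A) ∪ {t})
    Nonempty (H ≃* Coprod B (FreeGroup Unit)) ∧
      ∀ γ : Γ, γ ∉ H → {x : Γ | x ∈ H ∧ γ⁻¹ * x * γ ∈ H}.Finite := by
  intro Γ t H
  have hH : H = (Coprod.map B.subtype (MonoidHom.id (FreeGroup Unit))).range := by
    rw [← Coprod.closure_image_inl_union_image_inr B (S := {FreeGroup.of ()}), Set.image_singleton]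
    rw [← Set.range_unique (f := FreeGroup.of), FreeGroup.closure_range_of]
  have hid : Function.Injective (MonoidHom.id (FreeGroup Unit)) := Function.injective_id
  refine ⟨⟨(MulEquiv.subgroupCongr hH).trans
    (MonoidHom.ofInjective (Coprod.map_injective B.subtype_injective hid)).symm⟩, fun γ hγ => ?_⟩
  rw [hH] at hγ ⊢
  exact Coprod.finite_setOf_mem_range_map_and_conj_mem B.subtype_injective hid
    (fun _ => inferInstance)
    (fun h => (h (MonoidHom.range_eq_top.2 Function.surjective_id)).elim) hγ
end

section
/- Let G = ⟨A | R⟩ be a finitely presented group and let G₁ = (G * F(b₀,...,b_m)) / ⟨⟨ b_i⁻¹ w b_i = a_i : i = 0,...,m ⟩⟩, where A = {a₀,...,a_m} and w ∈ F(A). If w has trivial image in every finite quotient of G, then every homomorphism from G₁ to a finite group kills the image of G; consequently every finite quotient of G₁ factors through the retraction of G₁ onto the free group F₀ = ⟨b₀,...,b_m⟩, and the inclusion F₀ ↪ G₁ induces an isomorphism of profinite completions. -/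
/-!
Every generator `aᵢ` is conjugate in `G₁` to `w` by the stable letter `bᵢ`. A homomorphism
from `G₁` to a finite group restricts to a finite quotient of `G`, so it kills `w`, hence
every `aᵢ`, hence all of `G`. Sending `G` to `1` and each `bᵢ` to itself respects the
relations, so it gives a retraction `G₁ → F(b₀,...,b_m)`; a homomorphism of `G₁` that kills
`G` is determined by its values on the `bᵢ`, so it factors through this retraction.
-/

open Monoid

namespace Monoid.Coprod

section Retraction

variable {M N P : Type*}

theorem eq_comp_snd_of_comp_inl_eq_one [Monoid M] [Monoid N] [Monoid P] {f : M ∗ N →* P}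
    (hf : f.comp inl = 1) : f = (f.comp inr).comp snd :=
  hom_ext (by rw [MonoidHom.comp_assoc, snd_comp_inl, MonoidHom.comp_one, hf])
    (by rw [MonoidHom.comp_assoc, snd_comp_inr, MonoidHom.comp_id])

theorem eq_comp_lift_snd_of_map_mk_inl_eq_one [Group M] [Group N] [Monoid P]
    {K : Subgroup (M ∗ N)} [K.Normal] (hK : K ≤ snd.ker) {f : (M ∗ N) ⧸ K →* P}
    (hf : ∀ x, f (QuotientGroup.mk (inl x)) = 1) :
    f = (f.comp ((QuotientGroup.mk' K).comp inr)).comp (QuotientGroup.lift K snd hK) :=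
  QuotientGroup.monoidHom_ext K <|
    eq_comp_snd_of_comp_inl_eq_one (f := f.comp (QuotientGroup.mk' K)) (MonoidHom.ext hf)

end Retraction

section ConjugacyRelators

variable {G ι : Type*} [Group G] (a : ι → G) (w : G)

def conjugacyRelators : Set (G ∗ FreeGroup ι) :=
  {x | ∃ i, x = (inr (FreeGroup.of i))⁻¹ * inl w * inr (FreeGroup.of i) * (inl (a i))⁻¹}

theorem normalClosure_conjugacyRelators_le_ker_snd :
    Subgroup.normalClosure (conjugacyRelators a w) ≤ snd.ker :=
  Subgroup.normalClosure_le_normal <| by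
    rintro _ ⟨i, rfl⟩
    simp

variable {a w}

theorem mk_inl_eq_conj_mk_inl (i : ι) :
    (QuotientGroup.mk (inl (a i)) :
        (G ∗ FreeGroup ι) ⧸ Subgroup.normalClosure (conjugacyRelators a w)) =
      (QuotientGroup.mk (inr (FreeGroup.of i)))⁻¹ * QuotientGroup.mk (inl w) *
        QuotientGroup.mk (inr (FreeGroup.of i)) := by
  symm
  rw [← mul_inv_eq_one]
  exact (QuotientGroup.eq_one_iff _).2 (Subgroup.subset_normalClosure ⟨i, rfl⟩)

theorem map_mk_inl_eq_one (hgen : Subgroup.closure (Set.range a) = ⊤) {P : Type*} [Group P]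
    (f : (G ∗ FreeGroup ι) ⧸ Subgroup.normalClosure (conjugacyRelators a w) →* P)
    (hfw : f (QuotientGroup.mk (inl w)) = 1) (x : G) : f (QuotientGroup.mk (inl x)) = 1 := by
  have : f.comp ((QuotientGroup.mk' _).comp inl) = 1 := by
    refine MonoidHom.eq_of_eqOn_dense hgen ?_
    rintro _ ⟨i, rfl⟩
    simp [mk_inl_eq_conj_mk_inl, hfw]
  exact DFunLike.congr_fun this x

end ConjugacyRelators

end Monoid.Coprod

open Coprod

/-- Let `G` be a group generated by `a₀, ..., a_m`, let `w ∈ G`, and let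
`G₁ = (G * F(b₀,...,b_m)) / ⟨⟨ bᵢ⁻¹ w bᵢ = aᵢ ⟩⟩`.  If `w` has trivial image in
every finite quotient of `G`, then every homomorphism from `G₁` to a finite group
kills the image of `G`; consequently there is a retraction `ρ` of `G₁` onto the
free subgroup `F₀ = ⟨b₀,...,b_m⟩` through which every finite quotient of `G₁`
factors, so the inclusion `F₀ ↪ G₁` induces an isomorphism of profinite
completions. -/
theorem finite_quotients_factor_through_free_retraction
    (G : Type) [Group G] (m : ℕ) (a : Fin (m + 1) → G)
    (hgen : Subgroup.closure (Set.range a) = ⊤) (w : G)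
    (hw : ∀ (Q : Type) (_ : Group Q) (_ : Finite Q) (f : G →* Q), f w = 1) :
    let L := Coprod G (FreeGroup (Fin (m + 1)))
    let b : Fin (m + 1) → L := fun i => Coprod.inr (FreeGroup.of i)
    let N : Subgroup L := Subgroup.normalClosure
      {x : L | ∃ i : Fin (m + 1),
        x = (b i)⁻¹ * Coprod.inl w * b i * (Coprod.inl (a i))⁻¹}
    let ι : G →* L ⧸ N := (QuotientGroup.mk' N).comp Coprod.inl
    let j : FreeGroup (Fin (m + 1)) →* L ⧸ N := (QuotientGroup.mk' N).comp Coprod.inr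
    (∀ (Q : Type) (_ : Group Q) (_ : Finite Q) (f : L ⧸ N →* Q) (x : G), f (ι x) = 1) ∧
    ∃ ρ : L ⧸ N →* FreeGroup (Fin (m + 1)),
      (∀ y : FreeGroup (Fin (m + 1)), ρ (j y) = y) ∧
      (∀ x : G, ρ (ι x) = 1) ∧
      (∀ (Q : Type) (_ : Group Q) (_ : Finite Q) (f : L ⧸ N →* Q),
        ∃ g : FreeGroup (Fin (m + 1)) →* Q, f = g.comp ρ) := by
  intro L b N ι j
  have hN : N ≤ snd.ker := normalClosure_conjugacyRelators_le_ker_snd a w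
  have kills_G : ∀ (Q : Type) (_ : Group Q) (_ : Finite Q) (f : L ⧸ N →* Q) (x : G),
      f (ι x) = 1 := fun Q _ hQ f =>
    map_mk_inl_eq_one hgen f (hw Q _ hQ (f.comp ι))
  exact ⟨kills_G, QuotientGroup.lift N snd hN, fun _ => rfl, fun _ => rfl,
    fun Q _ hQ f => ⟨f.comp j, eq_comp_lift_snd_of_map_mk_inl_eq_one hN (kills_G Q _ hQ f)⟩⟩
end

section
/- Let 1 → N → Γ → G → 1 be a short exact sequence of groups with N generated by 2 elements and Γ residually finite and non-cyclic. If the profinite completion of G is trivial, then the profinite completion of Γ is topologically generated by 2 elements. -/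
/-- Let `1 → N → Γ → G → 1` be a short exact sequence with `N` 2-generated and
`Γ` residually finite and non-cyclic.  If the profinite completion of `G = Γ/N`
is trivial (every finite quotient of `Γ/N` is trivial), then the profinite
completion of `Γ` is topologically generated by 2 elements; equivalently, every
finite quotient of `Γ` is generated by 2 elements. -/
theorem two_generated_profinite_completion
    (Γ : Type) [Group Γ] (N : Subgroup Γ) [N.Normal]
    (hN2 : ∃ x y : Γ, x ∈ N ∧ y ∈ N ∧ Subgroup.closure {x, y} = N)
    (hrf : ∀ x : Γ, x ≠ 1 → ∃ (Q : Type) (_ : Group Q) (_ : Finite Q) (f : Γ →* Q),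
      f x ≠ 1)
    (hnc : ¬ IsCyclic Γ)
    (hG : ∀ (Q : Type) (_ : Group Q) (_ : Finite Q) (f : Γ ⧸ N →* Q) (x : Γ ⧸ N),
      f x = 1) :
    ∀ (Q : Type) (_ : Group Q) (_ : Finite Q) (f : Γ →* Q), Function.Surjective f →
      ∃ u v : Q, Subgroup.closure {u, v} = ⊤ := by
  intro Q _ _ f hf
  obtain ⟨x, y, hx, hy, hxy⟩ := hN2
  haveI : (N.map f).Normal := Subgroup.Normal.map ‹N.Normal› f hf
  -- The induced map Γ ⧸ N →* Q ⧸ N.map f is onto a finite group, which must be trivial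
  have key : N.map f = ⊤ := by
    have hle : N ≤ (N.map f).comap f := Subgroup.le_comap_map f N
    have htriv := hG (Q ⧸ N.map f) inferInstance inferInstance
      (QuotientGroup.map N (N.map f) f hle)
    rw [Subgroup.eq_top_iff']
    intro q
    obtain ⟨γ, rfl⟩ := hf q
    have := htriv (QuotientGroup.mk γ)
    rw [QuotientGroup.map_mk] at this
    exact (QuotientGroup.eq_one_iff _).mp this
  refine ⟨f x, f y, ?_⟩
  have : Subgroup.closure ({f x, f y} : Set Q) = N.map f := by
    rw [← hxy, MonoidHom.map_closure, Set.image_pair]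
  rw [this, key]
end

section
/- Let Γ be a group fitting in a short exact sequence 1 → N → Γ → G → 1 where N has property (T) (it suffices to assume: every finite-index subgroup of N has finite abelianization). If some finite-index subgroup K ≤ Γ surjects onto Z, then some finite-index subgroup of G surjects onto Z; i.e., vb₁(Γ) > 0 implies vb₁(G) > 0. -/
/-! A surjection `f : K → ℤ` kills `K ∩ N`: that subgroup has finite index in `N`, hence finite
abelianization, and `ℤ` is torsion-free. So `f` factors through the image of `K` in `Γ ⧸ N`,
which has finite index. -/

theorem MonoidHom.eq_one_of_finite_abelianization {G A : Type*} [Group G] [CommGroup A]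
    [IsMulTorsionFree A] [Finite (Abelianization G)] (f : G →* A) : f = 1 := by
  ext x
  rw [← Abelianization.lift_apply_of f x]
  exact ((Abelianization.lift f).isOfFinOrder (isOfFinOrder_of_finite _)).eq_one'

theorem MonoidHom.exists_surjective_of_ker_le {G H A : Type*} [Group G] [Group H] [Group A]
    {φ : G →* H} (hφ : Function.Surjective φ) {f : G →* A} (hf : Function.Surjective f)
    (hker : φ.ker ≤ f.ker) : ∃ g : H →* A, Function.Surjective g := by
  let g := φ.liftOfRightInverse _ (Function.rightInverse_surjInv hφ) ⟨f, hker⟩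
  refine ⟨g, fun a => ?_⟩
  obtain ⟨x, rfl⟩ := hf a
  exact ⟨φ x, φ.liftOfRightInverse_comp_apply _ _ _ x⟩

theorem Subgroup.finiteIndex_map_of_surjective {G H : Type*} [Group G] [Group H]
    (K : Subgroup G) [K.FiniteIndex] {π : G →* H} (hπ : Function.Surjective π) :
    (K.map π).FiniteIndex :=
  ⟨ne_zero_of_dvd_ne_zero K.index_ne_zero_of_finite (K.index_map_dvd hπ)⟩

theorem Subgroup.subgroupOf_le_ker_of_finite_abelianization {Γ A : Type*} [Group Γ]
    [CommGroup A] [IsMulTorsionFree A] (N K : Subgroup Γ)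
    [Finite (Abelianization (K.subgroupOf N))] (f : K →* A) : N.subgroupOf K ≤ f.ker := by
  intro k hk
  let ι : K.subgroupOf N →* K :=
    (N.subtype.comp (K.subgroupOf N).subtype).codRestrict K fun m => m.2
  exact DFunLike.congr_fun (f.comp ι).eq_one_of_finite_abelianization ⟨⟨k, hk⟩, k.2⟩

/-- Let `1 → N → Γ → G → 1` with every finite-index subgroup of `N` having finite
abelianization (e.g. `N` has property (T)).  If some finite-index subgroup of `Γ`
surjects onto `ℤ`, then some finite-index subgroup of `G = Γ/N` surjects onto `ℤ`;
i.e. `vb₁(Γ) > 0` implies `vb₁(G) > 0`. -/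
theorem vb1_quotient_pos_of_vb1_pos
    (Γ : Type) [Group Γ] (N : Subgroup Γ) [N.Normal]
    (hT : ∀ M : Subgroup N, M.FiniteIndex → Finite (Abelianization M))
    (hΓ : ∃ K : Subgroup Γ, K.FiniteIndex ∧
      ∃ f : K →* Multiplicative ℤ, Function.Surjective f) :
    ∃ K' : Subgroup (Γ ⧸ N), K'.FiniteIndex ∧
      ∃ g : K' →* Multiplicative ℤ, Function.Surjective g := by
  obtain ⟨K, hK, f, hf⟩ := hΓ
  have : Finite (Abelianization (K.subgroupOf N)) := hT _ inferInstance
  let π := QuotientGroup.mk' N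
  refine ⟨K.map π, K.finiteIndex_map_of_surjective (QuotientGroup.mk'_surjective N), ?_⟩
  refine MonoidHom.exists_surjective_of_ker_le (π.subgroupMap_surjective K) hf ?_
  calc (π.subgroupMap K).ker ≤ N.subgroupOf K := fun k hk => by
        simpa [π, Subtype.ext_iff, Subgroup.mem_subgroupOf] using hk
    _ ≤ f.ker := Subgroup.subgroupOf_le_ker_of_finite_abelianization N K f
end
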